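/- Let H be a real Hilbert space, a(·,·) a bounded, symmetric, coercive bilinear form on H with bound C and coercivity constant α, and f a bounded linear functional on H. Let u* ∈ H satisfy a(u*, v) = f(v) for all v ∈ H, let V ⊆ H be a closed subspace, and let u_V ∈ V satisfy a(u_V, v) = f(v) for all v ∈ V. Then ‖u* − u_V‖ ≤ (C/α) · inf_{v ∈ V} ‖u* − v‖ (Céa's lemma). -/
import Mathlib


/-- Céa's lemma: if `a` is a symmetric bilinear form on a real Hilbert space `H` which is
bounded with constant `C` and coercive with constant `α`, `u*` solves `a(u*, v) = f(v)` on `H`,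
and `u_V ∈ V` is the Galerkin solution on a closed subspace `V`, then
`‖u* − u_V‖ ≤ (C/α) · inf_{v ∈ V} ‖u* − v‖`. -/
theorem cea_lemma
    {H : Type*} [NormedAddCommGroup H] [InnerProductSpace ℝ H] [CompleteSpace H]
    (a : H →ₗ[ℝ] H →ₗ[ℝ] ℝ) (C α : ℝ)
    (ha_bdd : ∀ u v : H, |a u v| ≤ C * ‖u‖ * ‖v‖)
    (ha_symm : ∀ u v : H, a u v = a v u)
    (hα : 0 < α)
    (ha_coer : ∀ u : H, α * ‖u‖ ^ 2 ≤ a u u)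
    (f : H →L[ℝ] ℝ)
    (uStar : H) (huStar : ∀ v : H, a uStar v = f v)
    (V : Submodule ℝ H) (hV : IsClosed (V : Set H))
    (uV : H) (huV_mem : uV ∈ V) (huV : ∀ v ∈ V, a uV v = f v) :
    ‖uStar - uV‖ ≤ (C / α) * ⨅ v : V, ‖uStar - (v : H)‖ := by
  have hne : Nonempty V := ⟨⟨uV, huV_mem⟩⟩
  have hbdd : BddBelow (Set.range fun v : V => ‖uStar - (v : H)‖) := by
    exact ⟨0, by rintro x ⟨v, rfl⟩; exact norm_nonneg _⟩
  set e := uStar - uV with he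
  -- Galerkin orthogonality
  have horth : ∀ w ∈ V, a e w = 0 := by
    intro w hw
    simp only [he, map_sub, LinearMap.sub_apply]
    rw [huStar w, huV w hw]
    ring
  by_cases hez : e = 0
  · -- infimum is 0 since uV ∈ V
    have h1 : (⨅ v : V, ‖uStar - (v : H)‖) ≤ 0 := by
      have := ciInf_le hbdd (⟨uV, huV_mem⟩ : V)
      simpa [← he, hez] using this
    have h2 : 0 ≤ (⨅ v : V, ‖uStar - (v : H)‖) :=
      le_ciInf fun v => norm_nonneg _
    rw [le_antisymm h1 h2, mul_zero, hez, norm_zero]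
  · have hepos : 0 < ‖e‖ := norm_pos_iff.mpr hez
    have key : ∀ v : V, ‖e‖ ≤ (C / α) * ‖uStar - (v : H)‖ := by
      intro v
      have hvV : (uV : H) - (v : H) ∈ V := sub_mem huV_mem v.2
      have h1 : a e e = a e (uStar - v) := by
        have : a e (uStar - (v : H)) = a e e + a e ((uV : H) - v) := by
          rw [← map_add]
          congr 1
          rw [he]
          abel
        rw [this, horth _ hvV, add_zero]
      have h2 : α * ‖e‖ ^ 2 ≤ C * ‖e‖ * ‖uStar - (v : H)‖ := by
        calc α * ‖e‖ ^ 2 ≤ a e e := ha_coer e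
          _ = a e (uStar - v) := h1
          _ ≤ |a e (uStar - v)| := le_abs_self _
          _ ≤ C * ‖e‖ * ‖uStar - (v : H)‖ := ha_bdd _ _
      have h3 : α * ‖e‖ ≤ C * ‖uStar - (v : H)‖ := by
        have := h2
        nlinarith [norm_nonneg e]
      rw [div_mul_eq_mul_div, le_div_iff₀ hα]
      linarith
    calc ‖e‖ = ⨅ v : V, ‖e‖ := (ciInf_const).symm
      _ ≤ ⨅ v : V, (C / α) * ‖uStar - (v : H)‖ := by
          exact ciInf_mono ⟨0, by rintro x ⟨v, rfl⟩; exact norm_nonneg _⟩ key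
      _ = (C / α) * ⨅ v : V, ‖uStar - (v : H)‖ := by
          have hC : 0 ≤ C / α := by
            have h0 : α * ‖e‖ ^ 2 ≤ C * ‖e‖ * ‖e‖ := by
              calc α * ‖e‖ ^ 2 ≤ a e e := ha_coer e
                _ ≤ |a e e| := le_abs_self _
                _ ≤ C * ‖e‖ * ‖e‖ := ha_bdd _ _
            have : 0 ≤ C := by nlinarith [mul_pos hepos hepos]
            positivity
          rw [Real.mul_iInf_of_nonneg hC]
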